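/- A subset S of the positive integer lattice points in Z_{>0}^t is 'prime-factorizable' (Property S) — i.e., for any two points in S, any point obtained by choosing at each prime p the exponent tuple of one or the other point lies again in S — if and only if S decomposes as a product over primes: there exist sets V_p ⊆ Z_{≥0}^t for each prime p, with V_p = {0} for all but finitely many p varying per element, such that (n_1,...,n_t) ∈ S iff for every prime p the tuple of p-adic valuations (v_p(n_1),...,v_p(n_t)) lies in V_p. -/

import Mathlib

/-- Property (S): closure of a set of tuples of positive integers under prime-wise
recombination of exponent vectors of any two of its points. -/
def PropertyS {ι : Type*} (S : Set (ι → ℕ)) : Prop :=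
  ∀ n ∈ S, ∀ n' ∈ S, ∀ c : ℕ → Bool, ∀ u : ι → ℕ,
    (∀ j, 0 < u j) →
    (∀ j, ∀ p : ℕ, p.Prime →
      (u j).factorization p =
        if c p then (n j).factorization p else (n' j).factorization p) →
    u ∈ S

/-! If `S` is a product of local sets `V p`, a prime-wise recombination of two points of `S` has
at each prime the exponent tuple of one of them, so it lies in `S` again. Conversely, let `V p` be
the set of exponent tuples at `p` of points of `S`. A positive `n` whose tuples all lie in these
sets agrees with some `w ∈ S` (`S` is nonempty, since `V 2` is) outside a finite set of primes,
because there are finitely many coordinates. Recombining, one prime `q` of that set at a time,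
with a point of `S` that realises the tuple of `n` at `q` turns `w` into `n` without leaving `S`.
-/

theorem Nat.exists_ne_zero_factorization_eq_ite (a b : ℕ) (c : ℕ → Bool) :
    ∃ x ≠ 0, ∀ p, x.factorization p = if c p then a.factorization p else b.factorization p := by
  set f := a.factorization.filter (c · = true) + b.factorization.filter (c · = false)
  have hf : ∀ p ∈ f.support, p.Prime := fun p hp => by
    have hab : a.factorization p ≠ 0 ∨ b.factorization p ≠ 0 := by
      by_contra! h
      simp [f, Finsupp.filter_apply, h.1, h.2] at hp
    rcases hab with h | h <;> exact Nat.prime_of_mem_primeFactors (Finsupp.mem_support_iff.2 h)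
  refine ⟨f.prod (· ^ ·), Finsupp.prod_ne_zero_iff.2 fun p hp => pow_ne_zero _ (hf p hp).ne_zero,
    fun p => ?_⟩
  rw [Nat.prod_pow_factorization_eq_self hf]
  cases hc : c p <;> simp [f, hc]

section

variable {ι : Type*}

def expTuple (n : ι → ℕ) (p : ℕ) : ι → ℕ := fun j => (n j).factorization p

def IsPrimewiseProduct (S : Set (ι → ℕ)) (V : ℕ → Set (ι → ℕ)) : Prop :=
  ∀ n : ι → ℕ, (∀ j, 0 < n j) → (n ∈ S ↔ ∀ p : ℕ, p.Prime → expTuple n p ∈ V p)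

theorem eq_of_expTuple_eq {n m : ι → ℕ} (hn : ∀ j, 0 < n j) (hm : ∀ j, 0 < m j)
    (h : ∀ p, expTuple n p = expTuple m p) : n = m :=
  funext fun j => Nat.eq_of_factorization_eq (hn j).ne' (hm j).ne' fun p => congrFun (h p) j

theorem exists_pos_expTuple_eq_ite (n n' : ι → ℕ) (c : ℕ → Bool) :
    ∃ u : ι → ℕ, (∀ j, 0 < u j) ∧
      ∀ p, expTuple u p = if c p then expTuple n p else expTuple n' p := by
  choose u hu0 hu using fun j => Nat.exists_ne_zero_factorization_eq_ite (n j) (n' j) c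
  refine ⟨u, fun j => Nat.pos_of_ne_zero (hu0 j), fun p => funext fun j => ?_⟩
  change (u j).factorization p = _
  rw [hu]
  split <;> rfl

theorem exists_finset_expTuple_eq [Fintype ι] (n w : ι → ℕ) :
    ∃ F : Finset ℕ, (∀ p ∈ F, p.Prime) ∧ ∀ p ∉ F, expTuple n p = expTuple w p := by
  refine ⟨Finset.univ.biUnion fun j => (n j).primeFactors ∪ (w j).primeFactors,
    fun p hp => ?_, fun p hp => funext fun j => ?_⟩
  · simp only [Finset.mem_biUnion, Finset.mem_union] at hp
    obtain ⟨j, -, hj | hj⟩ := hp <;> exact Nat.prime_of_mem_primeFactors hj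
  · simp only [Finset.mem_biUnion, Finset.mem_union, Finset.mem_univ, true_and, not_exists,
      not_or, ← Nat.support_factorization, Finsupp.notMem_support_iff] at hp
    simp only [expTuple, (hp j).1, (hp j).2]

namespace PropertyS

variable {S : Set (ι → ℕ)}

theorem exists_mem_expTuple_eq_ite (hS : PropertyS S) {n n' : ι → ℕ} (hn : n ∈ S)
    (hn' : n' ∈ S) (c : ℕ → Bool) :
    ∃ u ∈ S, ∀ p, expTuple u p = if c p then expTuple n p else expTuple n' p := by
  obtain ⟨u, hu0, hu⟩ := exists_pos_expTuple_eq_ite n n' c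
  refine ⟨u, hS n hn n' hn' c u hu0 fun j p _ => ?_, hu⟩
  change expTuple u p j = _
  rw [hu]
  split <;> rfl

theorem exists_mem_expTuple_eq_on (hS : PropertyS S) {n w : ι → ℕ} (hw : w ∈ S)
    (F : Finset ℕ) (hF : ∀ q ∈ F, ∃ m ∈ S, expTuple m q = expTuple n q) :
    ∃ u ∈ S, ∀ p, expTuple u p = if p ∈ F then expTuple n p else expTuple w p := by
  induction F using Finset.induction_on with
  | empty => exact ⟨w, hw, fun p => by simp⟩
  | @insert q F _ ih =>
    obtain ⟨u, huS, hu⟩ := ih fun p hp => hF p (Finset.mem_insert_of_mem hp)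
    obtain ⟨m, hmS, hm⟩ := hF q (Finset.mem_insert_self q F)
    obtain ⟨u', hu'S, hu'⟩ := hS.exists_mem_expTuple_eq_ite hmS huS (fun p => decide (p = q))
    refine ⟨u', hu'S, fun p => ?_⟩
    by_cases hpq : p = q
    · subst hpq
      simp [hu', hm]
    · simp [hu', hu, hpq]

theorem isPrimewiseProduct [Fintype ι] (hS : PropertyS S) (hpos : ∀ n ∈ S, ∀ j, 0 < n j) :
    IsPrimewiseProduct S fun p => (expTuple · p) '' S := by
  refine fun n hn => ⟨fun hnS p _ => ⟨n, hnS, rfl⟩, fun h => ?_⟩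
  obtain ⟨w, hw, -⟩ := h 2 Nat.prime_two
  obtain ⟨F, hFprime, hF⟩ := exists_finset_expTuple_eq n w
  obtain ⟨u, hu, hun⟩ := hS.exists_mem_expTuple_eq_on hw F fun q hq => h q (hFprime q hq)
  have hun_eq : u = n := eq_of_expTuple_eq (hpos u hu) hn fun p => by
    by_cases hp : p ∈ F
    · simp [hun, hp]
    · simp [hun, hp, hF p hp]
  exact hun_eq ▸ hu

end PropertyS

theorem IsPrimewiseProduct.propertyS {S : Set (ι → ℕ)} {V : ℕ → Set (ι → ℕ)}
    (hV : IsPrimewiseProduct S V) (hpos : ∀ n ∈ S, ∀ j, 0 < n j) : PropertyS S := by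
  intro n hn n' hn' c u hu hufac
  refine (hV u hu).2 fun p hp => ?_
  have hup : expTuple u p = if c p then expTuple n p else expTuple n' p := by
    funext j
    change (u j).factorization p = _
    rw [hufac j p hp]
    split <;> rfl
  rw [hup]
  split
  · exact (hV n (hpos n hn)).1 hn p hp
  · exact (hV n' (hpos n' hn')).1 hn' p hp

end

/-- A set of positive lattice points satisfies Property (S) iff it decomposes as a
product over primes of local exponent sets. -/
theorem statement_0 {ι : Type*} [Fintype ι] (S : Set (ι → ℕ))
    (hpos : ∀ n ∈ S, ∀ j, 0 < n j) :
    PropertyS S ↔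
      ∃ V : ℕ → Set (ι → ℕ),
        ∀ n : ι → ℕ, (∀ j, 0 < n j) →
          (n ∈ S ↔ ∀ p : ℕ, p.Prime → (fun j => (n j).factorization p) ∈ V p) :=
  ⟨fun hS => ⟨_, hS.isPrimewiseProduct hpos⟩, fun ⟨_, hV⟩ => IsPrimewiseProduct.propertyS hV hpos⟩
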